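/- For every complex irreducible character χ of S_n (n ≥ 4) and every element g of cycle type (2,2,1^{n-4}), the identity χ(g)/χ(1) + (4/(n-3))·χ(c₃)/χ(1) − (n(n-1)/((n-2)(n-3)))·(χ(t)/χ(1))² + 2/((n-2)(n-3)) = 0 holds, where t is a transposition and c₃ is a 3-cycle. -/

import Mathlib

/-!
Let `T = ∑ ρ(swap i j)` over ordered pairs `i ≠ j`. It commutes with `ρ`, so by Schur's lemma
it is a scalar `μ` on the simple module `V`. Taking traces of `T` and of `T ρ(t)` gives
`n(n-1) χ(t) = μ χ(1)` and `∑ χ(swap i j * t) = μ χ(t)`. Sorting the pairs `(i, j)` by how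
many of `i, j` are moved by `t` evaluates the second sum as
`2 χ(1) + 4(n-2) χ(c₃) + (n-2)(n-3) χ(g)`; eliminating `μ` and dividing by
`(n-2)(n-3) χ(1)²` gives the identity.
-/

open CategoryTheory Equiv Equiv.Perm Finset

namespace FDRep

variable {k G : Type*} [Field k] [Group G] (V : FDRep k G)

theorem exists_sum_ρ_eq_smul_id [IsAlgClosed k] [Simple V] {ι : Type*} [Fintype ι] (s : ι → G)
    (hs : ∀ g, ∃ e : ι ≃ ι, ∀ i, s (e i) = g * s i * g⁻¹) :
    ∃ μ : k, ∑ i, V.ρ (s i) = μ • LinearMap.id := by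
  have hcomm (g : G) : (∑ i, V.ρ (s i)) * V.ρ g = V.ρ g * ∑ i, V.ρ (s i) := by
    obtain ⟨e, he⟩ := hs g
    rw [sum_mul, mul_sum, ← e.sum_comp]
    refine sum_congr rfl fun i _ => ?_
    rw [he, ← map_mul, ← map_mul]
    group
  let F : V ⟶ V := ⟨FGModuleCat.ofHom (∑ i, V.ρ (s i)), fun g => by
    ext v
    exact LinearMap.congr_fun (hcomm g) v⟩
  obtain ⟨μ, hμ⟩ := endomorphism_simple_eq_smul_id k F
  exact ⟨μ, (congrArg (fun φ : V ⟶ V => φ.hom.hom.hom) hμ).symm⟩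

theorem character_one_mul_sum_character_mul [IsAlgClosed k] [Simple V] {ι : Type*} [Fintype ι]
    (s : ι → G) (hs : ∀ g, ∃ e : ι ≃ ι, ∀ i, s (e i) = g * s i * g⁻¹) (y : G) :
    V.character 1 * ∑ i, V.character (s i * y)
      = (∑ i, V.character (s i)) * V.character y := by
  obtain ⟨μ, hμ⟩ := exists_sum_ρ_eq_smul_id V s hs
  have htrace : ∑ i, V.character (s i) = μ * V.character 1 := by
    simp only [character, ← map_sum, hμ, map_smul, map_one, smul_eq_mul]
    rw [Module.End.one_eq_id]
  have htrace_mul : ∑ i, V.character (s i * y) = μ * V.character y := by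
    simp only [character, map_mul, ← sum_mul, ← map_sum, hμ, smul_mul_assoc, map_smul,
      smul_eq_mul]
    rw [← Module.End.one_eq_id, one_mul]
  rw [htrace, htrace_mul]
  ring

theorem finrank_ne_zero [Simple V] : Module.finrank k V ≠ 0 := by
  intro h
  have := Module.finrank_zero_iff.mp h
  exact id_nonzero V (by ext v; exact Subsingleton.elim _ _)

theorem character_one_ne_zero [CharZero k] [Simple V] : V.character 1 ≠ 0 := by
  rw [char_one]
  exact Nat.cast_ne_zero.mpr V.finrank_ne_zero

theorem character_eq_of_cycleType_eq {α : Type*} [Fintype α] [DecidableEq α]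
    (V : FDRep k (Perm α)) {σ τ : Perm α} (h : σ.cycleType = τ.cycleType) :
    V.character σ = V.character τ := by
  obtain ⟨g, rfl⟩ := isConj_iff.mp (isConj_iff_cycleType_eq.mpr h)
  exact (V.char_conj σ g).symm

end FDRep

namespace Equiv.Perm

variable {α : Type*} [DecidableEq α]

theorem exists_equiv_swap_conj (σ : Perm α) :
    ∃ e : {p : α × α // p.1 ≠ p.2} ≃ {p : α × α // p.1 ≠ p.2},
      ∀ p, swap (e p).1.1 (e p).1.2 = σ * swap p.1.1 p.1.2 * σ⁻¹ :=
  ⟨(prodCongr σ σ).subtypeEquiv (by simp), fun p => swap_apply_apply σ _ _⟩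

variable [Fintype α]

theorem sum_offDiag_swap {M : Type*} [AddCommMonoid M] (f : Perm α → M)
    (hf : ∀ σ τ : Perm α, σ.cycleType = τ.cycleType → f σ = f τ) {t : Perm α}
    (ht : t.cycleType = {2}) :
    ∑ p ∈ univ.offDiag, f (swap p.1 p.2)
      = (Fintype.card α * (Fintype.card α - 1)) • f t := by
  rw [sum_eq_card_nsmul, offDiag_card, card_univ, Nat.mul_sub_one]
  intro p hp
  exact hf _ _ ((isSwap_iff_cycleType.mp ⟨_, _, (mem_offDiag.mp hp).2.2, rfl⟩).trans ht.symm)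

theorem sum_offDiag_swap_mul_swap {M : Type*} [AddCommMonoid M] (f : Perm α → M)
    (hf : ∀ σ τ : Perm α, σ.cycleType = τ.cycleType → f σ = f τ) {c g : Perm α}
    (hc : c.cycleType = {3}) (hg : g.cycleType = {2, 2}) {a b : α} (hab : a ≠ b) :
    ∑ p ∈ univ.offDiag, f (swap p.1 p.2 * swap a b)
      = 2 • f 1 + (4 * (Fintype.card α - 2)) • f c
        + ((Fintype.card α - 2) * (Fintype.card α - 3)) • f g := by
  set s : Finset α := {a, b}
  have hs : s.card = 2 := card_pair hab
  have hsc : sᶜ.card = Fintype.card α - 2 := by rw [card_compl, hs]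
  have hinside : ∑ p ∈ s.offDiag, f (swap p.1 p.2 * swap a b) = 2 • f 1 := by
    rw [sum_eq_card_nsmul (b := f 1), offDiag_card, hs]
    rintro ⟨x, y⟩ hp
    simp only [s, mem_offDiag, mem_insert, mem_singleton] at hp
    obtain ⟨rfl | rfl, rfl | rfl, hne⟩ := hp <;> simp_all [swap_comm]
  have houtside : ∑ p ∈ sᶜ.offDiag, f (swap p.1 p.2 * swap a b)
      = ((Fintype.card α - 2) * (Fintype.card α - 3)) • f g := by
    rw [sum_eq_card_nsmul (b := f g), offDiag_card, hsc, ← Nat.mul_sub_one, Nat.sub_sub]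
    intro p hp
    apply hf _ _ ((cycleType_swap_mul_swap_of_nodup _).trans hg.symm)
    simp only [s, mem_offDiag, mem_compl, mem_insert, mem_singleton] at hp
    simp only [List.nodup_cons, List.mem_cons, List.not_mem_nil]
    grind
  have hthree {x z : α} (hx : x ∈ s) (hz : z ∈ sᶜ) : f (swap x z * swap a b) = f c := by
    simp only [s, mem_compl, mem_insert, mem_singleton, not_or] at hx hz
    refine hf _ _ (Eq.trans ?_ hc.symm)
    rcases hx with rfl | rfl
    · exact (isThreeCycle_swap_mul_swap_same (Ne.symm hz.1) hab hz.2).cycleType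
    · rw [swap_comm a x]
      exact (isThreeCycle_swap_mul_swap_same (Ne.symm hz.2) hab.symm hz.1).cycleType
  have hmixed : ∑ p ∈ s ×ˢ sᶜ, f (swap p.1 p.2 * swap a b)
      = (2 * (Fintype.card α - 2)) • f c := by
    rw [sum_eq_card_nsmul (b := f c), card_product, hs, hsc]
    intro p hp
    rw [mem_product] at hp
    exact hthree hp.1 hp.2
  have hmixed' : ∑ p ∈ sᶜ ×ˢ s, f (swap p.1 p.2 * swap a b)
      = (2 * (Fintype.card α - 2)) • f c := by
    rw [sum_eq_card_nsmul (b := f c), card_product, hs, hsc, mul_comm]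
    intro p hp
    rw [mem_product] at hp
    rw [swap_comm p.1]
    exact hthree hp.2 hp.1
  rw [← union_compl s, offDiag_union disjoint_compl_right, sum_union, sum_union, sum_union,
    hinside, houtside, hmixed, hmixed', show 4 * (Fintype.card α - 2)
      = 2 * (Fintype.card α - 2) + 2 * (Fintype.card α - 2) by ring, add_nsmul]
  · abel
  all_goals simp only [disjoint_left, mem_union, mem_offDiag, mem_product, mem_compl]; grind

end Equiv.Perm

theorem FDRep.character_one_mul_sum_swap_mul {k α : Type*} [Field k] [IsAlgClosed k]
    [DecidableEq α] [Fintype α] (V : FDRep k (Perm α)) [Simple V] (y : Perm α) :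
    V.character 1 * ∑ p ∈ univ.offDiag, V.character (swap p.1 p.2 * y)
      = (∑ p ∈ univ.offDiag, V.character (swap p.1 p.2)) * V.character y := by
  simpa only [sum_subtype univ.offDiag (p := fun p : α × α => p.1 ≠ p.2) (by simp)] using
    V.character_one_mul_sum_character_mul _ exists_equiv_swap_conj y

/-- For every complex irreducible character `χ` of `S_n` (`n ≥ 4`), transposition `t`,
3-cycle `c`, and double transposition `g`:
`χ(g)/χ(1) + (4/(n-3))·χ(c)/χ(1) − (n(n-1)/((n-2)(n-3)))·(χ(t)/χ(1))² + 2/((n-2)(n-3)) = 0`. -/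
theorem stmt5 (n : ℕ) (hn : 4 ≤ n) (V : FDRep ℂ (Equiv.Perm (Fin n)))
    [CategoryTheory.Simple V]
    (t c g : Equiv.Perm (Fin n)) (ht : t.cycleType = {2}) (hc : c.cycleType = {3})
    (hg : g.cycleType = {2, 2}) :
    V.character g / V.character 1
      + (4 / ((n : ℂ) - 3)) * (V.character c / V.character 1)
      - ((n : ℂ) * ((n : ℂ) - 1) / (((n : ℂ) - 2) * ((n : ℂ) - 3))) *
          (V.character t / V.character 1) ^ 2
      + 2 / (((n : ℂ) - 2) * ((n : ℂ) - 3)) = 0 := by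
  obtain ⟨a, b, hab, rfl⟩ := isSwap_iff_cycleType.mpr ht
  have hclass (σ τ : Perm (Fin n)) (h : σ.cycleType = τ.cycleType) :
      V.character σ = V.character τ := V.character_eq_of_cycleType_eq h
  have key := V.character_one_mul_sum_swap_mul (swap a b)
  rw [sum_offDiag_swap _ hclass ht, sum_offDiag_swap_mul_swap _ hclass hc hg hab,
    Fintype.card_fin] at key
  push_cast [nsmul_eq_mul, Nat.cast_sub (by omega : 1 ≤ n), Nat.cast_sub (by omega : 2 ≤ n),
    Nat.cast_sub (by omega : 3 ≤ n)] at key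
  have h₁ := V.character_one_ne_zero
  have h₂ : (n : ℂ) - 2 ≠ 0 := sub_ne_zero.mpr (by norm_cast; omega)
  have h₃ : (n : ℂ) - 3 ≠ 0 := sub_ne_zero.mpr (by norm_cast; omega)
  field_simp
  linear_combination key
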